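/- Let D be a digraph with a distinguished vertex g, and let X be a set of new arcs, each incident to g, such that X contains an arc from every sink component of D not containing g into g, and an arc from g into every source component of D not containing g. If g's strong component in D is neither a source nor a sink (or D is connected appropriately), then D + X is strongly connected. -/

import Mathlib

def Reach {α : Type*} (A : Set (α × α)) (u v : α) : Prop :=
  Relation.ReflTransGen (fun x y => (x, y) ∈ A) u v

def Strong {α : Type*} (A : Set (α × α)) : Prop := ∀ u v : α, Reach A u v

def SameSCC {α : Type*} (A : Set (α × α)) (u v : α) : Prop := Reach A u v ∧ Reach A v u

def IsSourceComp {α : Type*} (A : Set (α × α)) (v : α) : Prop :=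
  ∀ a b : α, (a, b) ∈ A → SameSCC A b v → SameSCC A a v

def IsSinkComp {α : Type*} (A : Set (α × α)) (v : α) : Prop :=
  ∀ a b : α, (a, b) ∈ A → SameSCC A a v → SameSCC A b v

def IsTerminalComp {α : Type*} (A : Set (α × α)) (v : α) : Prop :=
  IsSourceComp A v ∨ IsSinkComp A v

lemma reach_mono {α : Type*} {A B : Set (α × α)} (h : A ⊆ B) {u v : α}
    (hr : Reach A u v) : Reach B u v :=
  Relation.ReflTransGen.mono (fun _ _ hxy => h hxy) u v hr

lemma reach_trans {α : Type*} {A : Set (α × α)} {u v w : α}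
    (h1 : Reach A u v) (h2 : Reach A v w) : Reach A u w :=
  Relation.ReflTransGen.trans h1 h2

/-- Every vertex reaches a vertex whose reachability set is minimal (a "sink" vertex). -/
lemma exists_sink {V : Type*} [Fintype V] (A : Set (V × V)) (v : V) :
    ∃ w : V, Reach A v w ∧ ∀ u, Reach A w u → Reach A u w := by
  classical
  let f : V → ℕ := fun w => Set.ncard {u | Reach A w u}
  have hv : v ∈ Finset.univ.filter (fun w => Reach A v w) := by
    simp only [Finset.mem_filter, Finset.mem_univ, true_and]
    exact Relation.ReflTransGen.refl
  obtain ⟨w, hwS, hmin⟩ :=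
    (Finset.univ.filter (fun w => Reach A v w)).exists_min_image f ⟨v, hv⟩
  have hvw : Reach A v w := (Finset.mem_filter.mp hwS).2
  refine ⟨w, hvw, fun u hwu => ?_⟩
  have huS : u ∈ Finset.univ.filter (fun w => Reach A v w) := by
    simp [reach_trans hvw hwu]
  have hle : f w ≤ f u := hmin u huS
  have hsub : {x | Reach A u x} ⊆ {x | Reach A w x} :=
    fun x hx => reach_trans hwu hx
  have heq : {x | Reach A u x} = {x | Reach A w x} :=
    Set.eq_of_subset_of_ncard_le hsub hle (Set.toFinite _)
  have : w ∈ {x | Reach A u x} := by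
    rw [heq]; exact Relation.ReflTransGen.refl
  exact this

/-- Every vertex is reached from a vertex whose co-reachability set is minimal. -/
lemma exists_source {V : Type*} [Fintype V] (A : Set (V × V)) (v : V) :
    ∃ w : V, Reach A w v ∧ ∀ u, Reach A u w → Reach A w u := by
  classical
  let f : V → ℕ := fun w => Set.ncard {u | Reach A u w}
  have hv : v ∈ Finset.univ.filter (fun w => Reach A w v) := by
    simp only [Finset.mem_filter, Finset.mem_univ, true_and]
    exact Relation.ReflTransGen.refl
  obtain ⟨w, hwS, hmin⟩ :=
    (Finset.univ.filter (fun w => Reach A w v)).exists_min_image f ⟨v, hv⟩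
  have hwv : Reach A w v := by
    have := (Finset.mem_filter.mp hwS).2
    simpa using this
  refine ⟨w, hwv, fun u huw => ?_⟩
  have huS : u ∈ Finset.univ.filter (fun x => Reach A x v) := by
    simp [reach_trans huw hwv]
  have hle : f w ≤ f u := hmin u huS
  have hsub : {x | Reach A x u} ⊆ {x | Reach A x w} :=
    fun x hx => reach_trans hx huw
  have heq : {x | Reach A x u} = {x | Reach A x w} :=
    Set.eq_of_subset_of_ncard_le hsub hle (Set.toFinite _)
  have : w ∈ {x | Reach A x u} := by
    rw [heq]; exact Relation.ReflTransGen.refl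
  exact this

/-- Let `X` be a set of new arcs, each incident to `g`, containing an arc from every sink
component of `D` not containing `g` into `g`, and an arc from `g` into every source component
of `D` not containing `g`. If the strong component of `g` in `D` is not terminal, then
`D + X` is strongly connected. -/
theorem stmt6 {V : Type*} [Fintype V] (A X : Set (V × V)) (g : V)
    (hstar : ∀ e ∈ X, e.1 = g ∨ e.2 = g)
    (hsinks : ∀ t₀ : V, IsSinkComp A t₀ → ¬ SameSCC A t₀ g →
      ∃ t : V, SameSCC A t t₀ ∧ (t, g) ∈ X)
    (hsources : ∀ s₀ : V, IsSourceComp A s₀ → ¬ SameSCC A s₀ g →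
      ∃ s : V, SameSCC A s s₀ ∧ (g, s) ∈ X)
    (hterm : ¬ IsTerminalComp A g) :
    Strong (A ∪ X) := by
  classical
  have hAsub : A ⊆ A ∪ X := Set.subset_union_left
  -- every vertex reaches g in A ∪ X
  have hto : ∀ v : V, Reach (A ∪ X) v g := by
    intro v
    obtain ⟨w, hvw, hmin⟩ := exists_sink A v
    have hwsink : IsSinkComp A w := by
      intro a b hab ⟨haw, hwa⟩
      have hwb : Reach A w b := reach_trans hwa (Relation.ReflTransGen.single hab)
      exact ⟨hmin b hwb, hwb⟩
    by_cases hsc : SameSCC A w g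
    · exact reach_mono hAsub (reach_trans hvw hsc.1)
    · obtain ⟨t, ⟨htw, hwt⟩, htX⟩ := hsinks w hwsink hsc
      have h1 : Reach A v t := reach_trans hvw hwt
      exact reach_trans (reach_mono hAsub h1)
        (Relation.ReflTransGen.single (Or.inr htX))
  -- g reaches every vertex in A ∪ X
  have hfrom : ∀ v : V, Reach (A ∪ X) g v := by
    intro v
    obtain ⟨w, hwv, hmin⟩ := exists_source A v
    have hwsource : IsSourceComp A w := by
      intro a b hab ⟨hbw, hwb⟩
      have haw : Reach A a w := reach_trans (Relation.ReflTransGen.single hab) hbw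
      exact ⟨haw, hmin a haw⟩
    by_cases hsc : SameSCC A w g
    · exact reach_mono hAsub (reach_trans hsc.2 hwv)
    · obtain ⟨s, ⟨hsw, hws⟩, hsX⟩ := hsources w hwsource hsc
      have h1 : Reach A s v := reach_trans hsw hwv
      exact reach_trans (Relation.ReflTransGen.single (Or.inr hsX))
        (reach_mono hAsub h1)
  intro u v
  exact reach_trans (hto u) (hfrom v)
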